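/- arXiv:1203.4662 — 6 statements merged into one kernel-verified Lean document; each statement's English description precedes it below -/
import Mathlib

section
/- Let L/F be a finite abelian extension of number fields with L = F(α, β) for some α, β ∈ L. Let a, b be nonzero elements of F and ν = [L : F(α)]. Then L = F(aα + b(νβ − Tr_{L/F(α)}(β))). -/
/-!
Put `K = F(α)` and `γ = aα + b(νβ - Tr_{L/K} β)`. The second summand has trace zero, so
`Tr_{L/K} γ = ν a α`. An automorphism `σ` of `L/F` commuting with `Gal(L/K)` commutes with
`Tr_{L/K}`, so if `σ` fixes `γ` it fixes `ν a α`, hence `α`; then it lies in `Gal(L/K)`, fixes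
`Tr_{L/K} β` and therefore `β`. So the fixing group of `F(γ)` is trivial and `F(γ) = L` by Galois
theory.
-/

open IntermediateField Module

theorem Algebra.trace_finrank_mul_sub_trace {K L : Type*} [CommRing K] [StrongRankCondition K]
    [CommRing L] [Algebra K L] [Module.Free K L] (x : L) :
    trace K L ((finrank K L : L) * x - algebraMap K L (trace K L x)) = 0 := by
  rw [map_sub, ← nsmul_eq_mul, map_nsmul, trace_algebraMap, sub_self]

namespace IntermediateField

variable {F L : Type*} [Field F] [Field L] [Algebra F L]

theorem mem_fixingSubgroup_adjoin_iff {s : Set L} {σ : L ≃ₐ[F] L} :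
    σ ∈ (adjoin F s).fixingSubgroup ↔ ∀ x ∈ s, σ x = x := by
  refine ⟨fun h x hx => (mem_fixingSubgroup_iff _ σ).1 h x (subset_adjoin F s hx), fun h => ?_⟩
  rw [mem_fixingSubgroup_iff]
  intro x hx
  exact DFunLike.congr_fun (adjoin_algHom_ext F (φ₁ := (σ : L →ₐ[F] L).comp (adjoin F s).val)
    (φ₂ := (adjoin F s).val) h) ⟨x, hx⟩

theorem apply_algebraMap_trace_of_commute (K : IntermediateField F L) [FiniteDimensional K L]
    [IsGalois K L] {σ : L ≃ₐ[F] L} (hσ : ∀ τ ∈ K.fixingSubgroup, Commute σ τ) (x : L) :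
    σ (algebraMap K L (Algebra.trace K L x)) = algebraMap K L (Algebra.trace K L (σ x)) := by
  simp only [trace_eq_sum_automorphisms, map_sum]
  refine Finset.sum_congr rfl fun τ _ => ?_
  have hτ : τ.restrictScalars F ∈ K.fixingSubgroup :=
    (mem_fixingSubgroup_iff _ _).2 fun y hy => τ.commutes ⟨y, hy⟩
  exact DFunLike.congr_fun (hσ _ hτ) x

theorem le_of_fixingSubgroup_le [FiniteDimensional F L] [IsGalois F L]
    {K M : IntermediateField F L} (h : K.fixingSubgroup ≤ M.fixingSubgroup) : M ≤ K := by
  rw [← IsGalois.fixedField_fixingSubgroup K, le_iff_le]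
  exact h

variable [CharZero L] [FiniteDimensional F L] [IsGalois F L]

theorem apply_eq_self_of_apply_combination_eq_self {α β : L} {a b : F} (ha : a ≠ 0) (hb : b ≠ 0)
    {σ : L ≃ₐ[F] L} (hcomm : ∀ τ ∈ F⟮α⟯.fixingSubgroup, Commute σ τ)
    (hσ : σ (algebraMap F L a * α + algebraMap F L b *
        ((finrank F⟮α⟯ L : L) * β - ((Algebra.trace F⟮α⟯ L β : F⟮α⟯) : L))) =
      algebraMap F L a * α + algebraMap F L b *
        ((finrank F⟮α⟯ L : L) * β - ((Algebra.trace F⟮α⟯ L β : F⟮α⟯) : L))) :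
    σ α = α ∧ σ β = β := by
  set K := F⟮α⟯
  set t : L := ((Algebra.trace K L β : K) : L)
  set γ := algebraMap F L a * α + algebraMap F L b * ((finrank K L : L) * β - t)
  have hν : (finrank K L : L) ≠ 0 := Nat.cast_ne_zero.2 finrank_pos.ne'
  have hA : algebraMap F L a ≠ 0 := by simpa using ha
  have hB : algebraMap F L b ≠ 0 := by simpa using hb
  have htrace : algebraMap K L (Algebra.trace K L γ) = finrank K L * (algebraMap F L a * α) := by
    have hγ : γ = algebraMap K L (algebraMap F K a * AdjoinSimple.gen F α) +
        algebraMap K L (algebraMap F K b) *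
          ((finrank K L : L) * β - algebraMap K L (Algebra.trace K L β)) := by
      simp [γ, t, K]
    rw [hγ, map_add, Algebra.trace_algebraMap, ← Algebra.smul_def (algebraMap F K b), map_smul,
      Algebra.trace_finrank_mul_sub_trace, smul_zero, add_zero, map_nsmul, nsmul_eq_mul]
    simp [K]
  have hα : σ α = α := by
    have h := apply_algebraMap_trace_of_commute K hcomm γ
    rw [hσ, htrace, map_mul, map_mul, map_natCast, σ.commutes, ← mul_assoc, ← mul_assoc] at h
    exact mul_left_cancel₀ (mul_ne_zero hν hA) h
  have ht : σ t = t := by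
    have hσK : σ ∈ K.fixingSubgroup := mem_fixingSubgroup_adjoin_iff.2 (by simpa using hα)
    exact (mem_fixingSubgroup_iff _ _).1 hσK t (Algebra.trace K L β).2
  refine ⟨hα, ?_⟩
  simp only [γ, map_add, map_mul, map_sub, map_natCast, AlgEquiv.commutes, hα, ht] at hσ
  exact mul_left_cancel₀ hν (sub_left_inj.1 (mul_left_cancel₀ hB (add_left_cancel hσ)))

end IntermediateField

theorem stmt0_general (F L : Type*) [Field F] [Field L] [Algebra F L]
    [NumberField L] [FiniteDimensional F L] [IsGalois F L]
    (habel : ∀ σ τ : L ≃ₐ[F] L, σ * τ = τ * σ)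
    (α β : L) (hgen : IntermediateField.adjoin F {α, β} = ⊤)
    (a b : F) (ha : a ≠ 0) (hb : b ≠ 0) :
    IntermediateField.adjoin F
      {algebraMap F L a * α +
        algebraMap F L b *
          ((Module.finrank F⟮α⟯ L : L) * β - ((Algebra.trace F⟮α⟯ L β : F⟮α⟯) : L))} = ⊤ := by
  refine top_le_iff.1 (hgen ▸ le_of_fixingSubgroup_le fun σ hσ => ?_)
  simp only [mem_fixingSubgroup_adjoin_iff, Set.mem_singleton_iff, forall_eq] at hσ
  obtain ⟨hα, hβ⟩ :=
    apply_eq_self_of_apply_combination_eq_self ha hb (fun τ _ => habel σ τ) hσ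
  exact mem_fixingSubgroup_adjoin_iff.2 (by simp [hα, hβ])

/-- Let `L/F` be a finite abelian extension of number fields with `L = F(α, β)`.
Let `a, b` be nonzero elements of `F` and `ν = [L : F(α)]`. Then
`L = F(aα + b(νβ − Tr_{L/F(α)}(β)))`. -/
theorem stmt0 (F L : Type*) [Field F] [Field L] [Algebra F L]
    [NumberField F] [NumberField L] [FiniteDimensional F L] [IsGalois F L]
    (habel : ∀ σ τ : L ≃ₐ[F] L, σ * τ = τ * σ)
    (α β : L) (hgen : IntermediateField.adjoin F {α, β} = ⊤)
    (a b : F) (ha : a ≠ 0) (hb : b ≠ 0) :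
    IntermediateField.adjoin F
      {algebraMap F L a * α +
        algebraMap F L b *
          ((Module.finrank F⟮α⟯ L : L) * β - ((Algebra.trace F⟮α⟯ L β : F⟮α⟯) : L))} = ⊤ :=
  stmt0_general F L habel α β hgen a b ha hb
end

section
/- Let L/F be a finite abelian extension of number fields and α, β ∈ L with L = F(α, β). If Tr_{L/F(α)}(β) = 0 and a, b are nonzero elements of F, then L = F(aα + b·[L:F(α)]·β). -/
/-!
Put `K = F(α)`, `n = [L:K]` and `γ = aα + bnβ`. Since `Tr_{L/K}(β) = 0`, `Tr_{L/K}(γ) = naα`.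
As `Gal(L/F)` is abelian, every `σ ∈ Gal(L/F)` commutes with `Gal(L/K)`, hence with `Tr_{L/K}`;
so if `σ` fixes `γ` it fixes `naα`, hence `α`, hence also `β`, and then `σ = 1` because
`L = F(α, β)`. By the Galois correspondence `F(γ) = L`.
-/

open scoped IntermediateField

namespace AlgEquiv

variable {F E : Type*} [Field F] [Field E] [Algebra F E] [Algebra.IsAlgebraic F E]

theorem eq_one_of_adjoin_eq_top {s : Set E} (hs : IntermediateField.adjoin F s = ⊤)
    {σ : Gal(E/F)} (h : ∀ x ∈ s, σ x = x) : σ = 1 := by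
  have hs' : Algebra.adjoin F s = ⊤ := by
    rw [← IntermediateField.adjoin_toSubalgebra, hs, IntermediateField.top_toSubalgebra]
  exact coe_toAlgHom_injective (AlgHom.ext_of_adjoin_eq_top hs' h)

end AlgEquiv

namespace IsGalois

variable {F E : Type*} [Field F] [Field E] [Algebra F E] [FiniteDimensional F E] [IsGalois F E]

theorem adjoin_simple_eq_top_of_forall_fixes_eq_one {x : E}
    (h : ∀ σ : Gal(E/F), σ x = x → σ = 1) : F⟮x⟯ = ⊤ := by
  have hfix : F⟮x⟯.fixingSubgroup = ⊥ := (Subgroup.eq_bot_iff_forall _).mpr fun σ hσ ↦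
    h σ (hσ ⟨x, IntermediateField.mem_adjoin_simple_self F x⟩)
  rw [← fixedField_fixingSubgroup F⟮x⟯, hfix, IntermediateField.fixedField_bot]

theorem apply_algebraMap_trace_of_commute (K : IntermediateField F E) {σ : Gal(E/F)}
    (hσ : ∀ τ : Gal(E/K), Commute σ (τ.restrictScalars F)) (x : E) :
    σ (algebraMap K E (Algebra.trace K E x)) = algebraMap K E (Algebra.trace K E (σ x)) := by
  simp only [trace_eq_sum_automorphisms, map_sum]
  exact Finset.sum_congr rfl fun τ _ ↦ DFunLike.congr_fun (hσ τ) x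

end IsGalois

theorem stmt1_general (F L : Type*) [Field F] [Field L] [Algebra F L]
    [NumberField L] [FiniteDimensional F L] [IsGalois F L]
    (habel : ∀ σ τ : L ≃ₐ[F] L, σ * τ = τ * σ)
    (α β : L) (hgen : IntermediateField.adjoin F {α, β} = ⊤)
    (htr : Algebra.trace F⟮α⟯ L β = 0)
    (a b : F) (ha : a ≠ 0) (hb : b ≠ 0) :
    IntermediateField.adjoin F
      {algebraMap F L a * α +
        algebraMap F L b * ((Module.finrank F⟮α⟯ L : L) * β)} = ⊤ := by
  set K := F⟮α⟯
  set n := Module.finrank K L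
  set γ := algebraMap F L a * α + algebraMap F L b * ((n : L) * β)
  have hn : (n : L) ≠ 0 := Nat.cast_ne_zero.mpr Module.finrank_pos.ne'
  have hγ : γ = algebraMap K L (a • IntermediateField.AdjoinSimple.gen F α) +
      (b • (n : K)) • β := by
    simp [γ, Algebra.smul_def, mul_assoc]
  have htrγ : algebraMap K L (Algebra.trace K L γ) = n * (algebraMap F L a * α) := by
    rw [hγ, map_add, Algebra.trace_algebraMap, LinearMap.map_smul, htr, smul_zero, add_zero,
      nsmul_eq_mul, map_mul, map_natCast, Algebra.smul_def, map_mul,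
      ← IsScalarTower.algebraMap_apply, IntermediateField.AdjoinSimple.algebraMap_gen]
  refine IsGalois.adjoin_simple_eq_top_of_forall_fixes_eq_one fun σ hσ ↦ ?_
  have hσα : σ α = α := by
    have := IsGalois.apply_algebraMap_trace_of_commute K (fun τ ↦ habel σ _) γ
    rw [hσ, htrγ, map_mul, map_mul, map_natCast, σ.commutes] at this
    exact mul_left_cancel₀ ((map_ne_zero _).mpr ha) (mul_left_cancel₀ hn this)
  have hσβ : σ β = β := by
    simp only [γ, map_add, map_mul, map_natCast, σ.commutes, hσα, add_right_inj] at hσ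
    exact mul_left_cancel₀ hn (mul_left_cancel₀ ((map_ne_zero _).mpr hb) hσ)
  exact AlgEquiv.eq_one_of_adjoin_eq_top hgen (by simp [hσα, hσβ])

/-- Let `L/F` be a finite abelian extension of number fields and `α, β ∈ L` with
`L = F(α, β)`. If `Tr_{L/F(α)}(β) = 0` and `a, b` are nonzero elements of `F`, then
`L = F(aα + b·[L:F(α)]·β)`. -/
theorem stmt1 (F L : Type*) [Field F] [Field L] [Algebra F L]
    [NumberField F] [NumberField L] [FiniteDimensional F L] [IsGalois F L]
    (habel : ∀ σ τ : L ≃ₐ[F] L, σ * τ = τ * σ)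
    (α β : L) (hgen : IntermediateField.adjoin F {α, β} = ⊤)
    (htr : Algebra.trace F⟮α⟯ L β = 0)
    (a b : F) (ha : a ≠ 0) (hb : b ≠ 0) :
    IntermediateField.adjoin F
      {algebraMap F L a * α +
        algebraMap F L b * ((Module.finrank F⟮α⟯ L : L) * β)} = ⊤ :=
  stmt1_general F L habel α β hgen htr a b ha hb
end

section
/- Let ℓ be an odd prime, n = (ℓ−1)/2, ζ = e^{2πi/ℓ}, and define α_{μ,i} = 1 + 2p^μ ζ^i for 1 ≤ i ≤ n+1 and α_{μ,i} = 1 + 2p^μ(ζ^n + ζ^{n+1} − ζ^i − ζ^{−i}) for n+2 ≤ i ≤ 2n. Writing α_{μ,i} = 1 + 2p^μ(Σ_j b_{ij} ζ^j) with b_{ij} ∈ ℤ, the resulting 2n×2n integer matrix B = (b_{ij}) has determinant (−1)^{n−1}. -/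
open Complex

/-!
The powers `ζ, …, ζ^{2n}` are linearly independent over `ℤ` (the minimal polynomial of `ζ` is
the cyclotomic polynomial, of degree `2n`), so the hypothesis determines `B` entrywise. With rows
and columns indexed from `0`, row `i ≤ n` of `B` is `eᵢ` and row `i > n` is
`e_{n-1} + e_n - eᵢ - e_{2n-1-i}`. All these extra columns lie left of the diagonal, so `B` is
lower triangular with `n + 1` diagonal entries `1` followed by `n - 1` entries `-1`.
-/

theorem IsPrimitiveRoot.linearIndependent_int_pow {K : Type*} [Field K] [CharZero K] {ζ : K}
    {k : ℕ} (hζ : IsPrimitiveRoot ζ k) (hk : 0 < k) :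
    LinearIndependent ℤ fun i : Fin k.totient => ζ ^ (i : ℕ) := by
  have h := linearIndependent_pow (K := ℚ) ζ
  rw [← Polynomial.cyclotomic_eq_minpoly_rat hζ hk, Polynomial.natDegree_cyclotomic] at h
  exact h.restrict_scalars' ℤ

theorem IsPrimitiveRoot.eq_of_sum_intCast_mul_pow_succ_eq {K : Type*} [Field K] [CharZero K]
    {ζ : K} {k m : ℕ} (hζ : IsPrimitiveRoot ζ k) (hk : 0 < k) (hm : m ≤ k.totient)
    {c d : Fin m → ℤ}
    (h : ∑ j, (c j : K) * ζ ^ ((j : ℕ) + 1) = ∑ j, (d j : K) * ζ ^ ((j : ℕ) + 1)) : c = d := by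
  have hli := (hζ.linearIndependent_int_pow hk).comp _ (Fin.castLE_injective hm)
  have hsum : ∑ j, (c j - d j) • ζ ^ (j : ℕ) = 0 := by
    refine mul_left_cancel₀ (hζ.ne_zero hk.ne') ?_
    rw [mul_zero, Finset.mul_sum, ← sub_eq_zero.mpr h, ← Finset.sum_sub_distrib]
    refine Finset.sum_congr rfl fun j _ => ?_
    rw [zsmul_eq_mul, pow_succ]
    push_cast
    ring
  funext j
  exact sub_eq_zero.mp (Fintype.linearIndependent_iff.mp hli _ hsum j)

/-- Row `i` holds the coordinates of `(α_{μ,i+1} - 1) / (2 p^μ)`: column `j` stands for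
`ζ^{j+1}`, so `ζ^{-(i+1)} = ζ^{2n-i}` sits in column `2n - 1 - i`. -/
def alphaCoordMatrix (n : ℕ) : Matrix (Fin (2 * n)) (Fin (2 * n)) ℤ :=
  Matrix.of fun i j =>
    let δ : ℕ → ℤ := fun a => if (j : ℕ) = a then 1 else 0
    if (i : ℕ) ≤ n then δ i else δ (n - 1) + δ n - δ i - δ (2 * n - 1 - i)

theorem sum_intCast_ite_val_eq_mul {R : Type*} [CommRing R] {m a : ℕ} (ha : a < m) (f : ℕ → R) :
    ∑ j : Fin m, ((if (j : ℕ) = a then 1 else 0 : ℤ) : R) * f j = f a := by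
  rw [Fin.sum_univ_eq_sum_range (fun j => ((if j = a then 1 else 0 : ℤ) : R) * f j)]
  simp [ha]

theorem sum_alphaCoordMatrix_mul_pow {R : Type*} [CommRing R] (n : ℕ) (ζ : R) (i : Fin (2 * n)) :
    ∑ j, (alphaCoordMatrix n i j : R) * ζ ^ ((j : ℕ) + 1) =
      if (i : ℕ) + 1 ≤ n + 1 then ζ ^ ((i : ℕ) + 1)
      else ζ ^ n + ζ ^ (n + 1) - ζ ^ ((i : ℕ) + 1) - ζ ^ (2 * n + 1 - ((i : ℕ) + 1)) := by
  have hi := i.isLt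
  have hδ {a : ℕ} (ha : a < 2 * n) := sum_intCast_ite_val_eq_mul ha fun j => ζ ^ (j + 1)
  simp only [alphaCoordMatrix, Matrix.of_apply, add_le_add_iff_right]
  split_ifs with hin
  · exact hδ hi
  · simp only [Int.cast_sub, Int.cast_add, sub_mul, add_mul, Finset.sum_sub_distrib,
      Finset.sum_add_distrib, hδ hi, hδ (show n - 1 < 2 * n by omega), hδ (show n < 2 * n by omega),
      hδ (show 2 * n - 1 - i < 2 * n by omega)]
    rw [Nat.sub_add_cancel (by omega), show 2 * n - 1 - i + 1 = 2 * n + 1 - (i + 1) by omega]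

theorem alphaCoordMatrix_isLowerTriangular (n : ℕ) : (alphaCoordMatrix n).IsLowerTriangular := by
  intro i j hij
  have : (i : ℕ) < j := hij
  simp only [alphaCoordMatrix, Matrix.of_apply]
  split_ifs <;> omega

theorem alphaCoordMatrix_apply_self (n : ℕ) (i : Fin (2 * n)) :
    alphaCoordMatrix n i i = if (i : ℕ) ≤ n then 1 else -1 := by
  simp only [alphaCoordMatrix, Matrix.of_apply]
  split_ifs <;> omega

theorem det_alphaCoordMatrix (n : ℕ) : (alphaCoordMatrix n).det = (-1) ^ (n - 1) := by
  rw [Matrix.det_of_isLowerTriangular _ (alphaCoordMatrix_isLowerTriangular n)]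
  simp only [alphaCoordMatrix_apply_self]
  rw [Fin.prod_univ_eq_prod_range (fun i => if i ≤ n then (1 : ℤ) else -1)]
  rcases n with _ | n
  · simp
  rw [show 2 * (n + 1) = (n + 2) + n by ring, Finset.prod_range_add,
    Finset.prod_congr rfl fun i hi => if_pos (by simp at hi; omega),
    Finset.prod_congr rfl fun i _ => if_neg (by omega)]
  simp

theorem stmt3_general (ℓ p μ n : ℕ) (hℓ : ℓ.Prime) (hℓo : Odd ℓ) (hp : p.Prime)
    (hn : n = (ℓ - 1) / 2)
    (ζ : ℂ) (hζ : ζ = Complex.exp (2 * Real.pi * Complex.I / ℓ))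
    (B : Matrix (Fin (2 * n)) (Fin (2 * n)) ℤ)
    (hB : ∀ i : Fin (2 * n),
      (if (i : ℕ) + 1 ≤ n + 1 then (1 + 2 * (p : ℂ) ^ μ * ζ ^ ((i : ℕ) + 1) : ℂ)
        else 1 + 2 * (p : ℂ) ^ μ *
          (ζ ^ n + ζ ^ (n + 1) - ζ ^ ((i : ℕ) + 1) - ζ ^ (ℓ - ((i : ℕ) + 1)))) =
      1 + 2 * (p : ℂ) ^ μ * ∑ j : Fin (2 * n), (B i j : ℂ) * ζ ^ ((j : ℕ) + 1)) :
    B.det = (-1) ^ (n - 1) := by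
  have hℓn : ℓ = 2 * n + 1 := by obtain ⟨k, rfl⟩ := hℓo; omega
  subst hℓn
  have hprim : IsPrimitiveRoot ζ (2 * n + 1) := hζ ▸ Complex.isPrimitiveRoot_exp _ (by omega)
  have hc : (2 * (p : ℂ) ^ μ) ≠ 0 :=
    mul_ne_zero two_ne_zero (pow_ne_zero _ (Nat.cast_ne_zero.mpr hp.ne_zero))
  have hrow (i : Fin (2 * n)) : B i = alphaCoordMatrix n i := by
    refine hprim.eq_of_sum_intCast_mul_pow_succ_eq (m := 2 * n) (by omega) (Nat.totient_prime hℓ).ge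
      (mul_left_cancel₀ hc (add_left_cancel (a := 1) ((hB i).symm.trans ?_)))
    rw [sum_alphaCoordMatrix_mul_pow, mul_ite, add_ite]
  rw [Matrix.ext fun i => congrFun (hrow i), det_alphaCoordMatrix]

/-- Let `ℓ` be an odd prime, `n = (ℓ−1)/2`, `ζ = e^{2πi/ℓ}`, and define
`α_{μ,i} = 1 + 2p^μ ζ^i` for `1 ≤ i ≤ n+1` and
`α_{μ,i} = 1 + 2p^μ(ζ^n + ζ^{n+1} − ζ^i − ζ^{−i})` for `n+2 ≤ i ≤ 2n`.
Writing `α_{μ,i} = 1 + 2p^μ(Σ_j b_{ij} ζ^j)` with `b_{ij} ∈ ℤ`, the resulting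
`2n×2n` integer matrix `B = (b_{ij})` has determinant `(−1)^{n−1}`. -/
theorem stmt3 (ℓ p μ n : ℕ) (hℓ : ℓ.Prime) (hℓo : Odd ℓ) (hp : p.Prime) (hpo : Odd p)
    (hμ : 0 < μ) (hn : n = (ℓ - 1) / 2)
    (ζ : ℂ) (hζ : ζ = Complex.exp (2 * Real.pi * Complex.I / ℓ))
    (B : Matrix (Fin (2 * n)) (Fin (2 * n)) ℤ)
    (hB : ∀ i : Fin (2 * n),
      (if (i : ℕ) + 1 ≤ n + 1 then (1 + 2 * (p : ℂ) ^ μ * ζ ^ ((i : ℕ) + 1) : ℂ)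
        else 1 + 2 * (p : ℂ) ^ μ *
          (ζ ^ n + ζ ^ (n + 1) - ζ ^ ((i : ℕ) + 1) - ζ ^ (ℓ - ((i : ℕ) + 1)))) =
      1 + 2 * (p : ℂ) ^ μ * ∑ j : Fin (2 * n), (B i j : ℂ) * ζ ^ ((j : ℕ) + 1)) :
    B.det = (-1) ^ (n - 1) :=
  stmt3_general ℓ p μ n hℓ hℓo hp hn ζ hζ B hB
end

section
/- Let ℓ be an odd prime, n = (ℓ−1)/2, and for 1 ≤ i, j ≤ 2n let n_{ij} = 1 if ij mod ℓ lies in {1,…,n} and 0 otherwise. Let N'_ℓ ∈ M_{(n+1)×2n}(ℤ/pℤ) be the matrix (n_{ij}) for 1 ≤ i ≤ n+1, 1 ≤ j ≤ 2n, and let N_ℓ = (n_{ij})_{1≤i,j≤n} ∈ M_n(ℤ). Then for an odd prime p, N'_ℓ has rank n+1 over ℤ/pℤ if and only if p does not divide det(N_ℓ). -/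
/-!
Column `2n + 1 - j` of `N'_ℓ` is the complement of column `j` (the residues of `ij` and
`i(ℓ - j)` add up to `ℓ`), so the column space of `N'_ℓ` is spanned by its first `n` columns and
the ones vector. Hence `N'_ℓ` has full rank `n + 1` iff the square matrix formed by these `n + 1`
columns is invertible mod `p`. Its first column is `(1, …, 1, 0)`, so subtracting it from the ones
column leaves the last unit vector, and expanding along that column gives `det N_ℓ`.
-/

theorem Nat.mod_add_mod_eq_of_dvd_add {a b ℓ : ℕ} (h : ℓ ∣ a + b) (ha : ¬ ℓ ∣ a) :
    a % ℓ + b % ℓ = ℓ := by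
  have hℓ : 0 < ℓ := Nat.pos_of_ne_zero fun h0 => by simp_all
  have ha' : 0 < a % ℓ := Nat.pos_of_ne_zero fun h0 => ha (Nat.dvd_of_mod_eq_zero h0)
  obtain ⟨c, hc⟩ : ℓ ∣ a % ℓ + b % ℓ := by
    rw [Nat.dvd_iff_mod_eq_zero, ← Nat.add_mod, ← Nat.dvd_iff_mod_eq_zero]; exact h
  have := Nat.mod_lt a hℓ
  have := Nat.mod_lt b hℓ
  obtain rfl | rfl | hc2 : c = 0 ∨ c = 1 ∨ 2 ≤ c := by omega
  · omega
  · omega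
  · nlinarith

/-- The residues of `x * (j + 1)` and `x * (2n + 1 - (j + 1))` are nonzero and add up to `2n + 1`,
so exactly one of them lies in `[1, n]`. -/
theorem ite_mem_Icc_mod_mul_rev {R : Type*} [Ring R] {n x : ℕ} (hℓ : (2 * n + 1).Prime)
    (hx0 : 0 < x) (hx : x < 2 * n + 1) (j : Fin (2 * n)) :
    (if x * ((j.rev : ℕ) + 1) % (2 * n + 1) ∈ Finset.Icc 1 n then (1 : R) else 0) =
      1 - if x * ((j : ℕ) + 1) % (2 * n + 1) ∈ Finset.Icc 1 n then 1 else 0 := by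
  have hndvd : ¬ 2 * n + 1 ∣ x * ((j : ℕ) + 1) := by
    rw [hℓ.dvd_mul, not_or]
    exact ⟨fun h => by have := Nat.le_of_dvd hx0 h; omega,
      fun h => by have := Nat.le_of_dvd (by omega) h; omega⟩
  have hcols : (j : ℕ) + 1 + ((j.rev : ℕ) + 1) = 2 * n + 1 := by rw [Fin.val_rev]; omega
  have hsum := Nat.mod_add_mod_eq_of_dvd_add (b := x * ((j.rev : ℕ) + 1))
    ⟨x, by rw [← mul_add, hcols, mul_comm]⟩ hndvd
  have := Nat.mod_lt (x * ((j : ℕ) + 1)) (by omega : 0 < 2 * n + 1)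
  have := Nat.mod_lt (x * ((j.rev : ℕ) + 1)) (by omega : 0 < 2 * n + 1)
  simp only [Finset.mem_Icc]
  split_ifs <;> first | (exfalso; omega) | simp

namespace Matrix

theorem rank_eq_card_iff_det_ne_zero {m K : Type*} [Fintype m] [DecidableEq m] [Field K]
    (A : Matrix m m K) : A.rank = Fintype.card m ↔ A.det ≠ 0 := by
  rw [rank_eq_finrank_span_row, ← Set.finrank, eq_comm,
    ← linearIndependent_iff_card_eq_finrank_span, linearIndependent_rows_iff_isUnit,
    isUnit_iff_isUnit_det, isUnit_iff_ne_zero]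

section LastColumn

variable {R : Type*} [CommRing R] {n : ℕ}

theorem det_eq_det_submatrix_castSucc_of_col_last (B : Matrix (Fin (n + 1)) (Fin (n + 1)) R)
    (hB : ∀ i, B i (Fin.last n) = if i = Fin.last n then 1 else 0) :
    B.det = (B.submatrix Fin.castSucc Fin.castSucc).det := by
  rw [det_succ_column B (Fin.last n), Finset.sum_eq_single (Fin.last n)]
  · simp [hB, ← two_mul]
  · intro i _ hi
    simp [hB, hi]
  · simp

theorem det_eq_det_submatrix_castSucc_of_col_last_sub (B : Matrix (Fin (n + 1)) (Fin (n + 1)) R)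
    {j : Fin (n + 1)} (hj : j ≠ Fin.last n)
    (hB : ∀ i, B i (Fin.last n) - B i j = if i = Fin.last n then 1 else 0) :
    B.det = (B.submatrix Fin.castSucc Fin.castSucc).det := by
  rw [← det_updateCol_add_smul_self B hj.symm (-1), det_eq_det_submatrix_castSucc_of_col_last]
  · congr 1
    ext i k
    simp
  · intro i
    simp [← hB, sub_eq_add_neg]

end LastColumn

section FirstColsSnocOne

variable {m : Type*} {n : ℕ}

def firstColsSnocOne {R : Type*} [One R] (A : Matrix m (Fin (2 * n)) R) :
    Matrix m (Fin (n + 1)) R :=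
  of fun i => Fin.snoc (α := fun _ => R) (fun k => A i (Fin.castLE (by omega) k)) 1

/-- The first `n` columns and the ones vector span the column space of `A`. -/
theorem rank_firstColsSnocOne {K : Type*} [Field K] (hn : 0 < n) (A : Matrix m (Fin (2 * n)) K)
    (hA : ∀ i j, A i j.rev = 1 - A i j) :
    A.firstColsSnocOne.rank = A.rank := by
  have hcol_rev : ∀ j, A.col j.rev = 1 - A.col j := fun j => funext fun i => hA i j
  have hcol_castSucc : ∀ k : Fin n,
      A.firstColsSnocOne.col k.castSucc = A.col (k.castLE (by omega)) :=
    fun k => funext fun i => by simp [firstColsSnocOne]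
  have hcol_last : A.firstColsSnocOne.col (Fin.last n) = 1 :=
    funext fun i => by simp [firstColsSnocOne]
  set S := Submodule.span K (Set.range A.firstColsSnocOne.col)
  set T := Submodule.span K (Set.range A.col)
  suffices S = T by
    rw [rank_eq_finrank_span_cols, rank_eq_finrank_span_cols]
    exact congrArg (fun U : Submodule K (m → K) => Module.finrank K U) this
  have hone_T : (1 : m → K) ∈ T := by
    have : (1 : m → K) = A.col ⟨0, by omega⟩ + A.col (Fin.rev ⟨0, by omega⟩) := by
      rw [hcol_rev]; abel
    rw [this]
    exact T.add_mem (Submodule.subset_span ⟨_, rfl⟩) (Submodule.subset_span ⟨_, rfl⟩)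
  have hone_S : (1 : m → K) ∈ S := hcol_last ▸ Submodule.subset_span ⟨_, rfl⟩
  have hfirst_S : ∀ j : Fin (2 * n), (j : ℕ) < n → A.col j ∈ S := fun j hj => by
    rw [show A.col j = A.firstColsSnocOne.col (⟨j, hj⟩ : Fin n).castSucc from
      (hcol_castSucc ⟨j, hj⟩).symm]
    exact Submodule.subset_span ⟨_, rfl⟩
  apply le_antisymm
  · rw [Submodule.span_le, Set.range_subset_iff]
    intro k
    induction k using Fin.lastCases with
    | last => simpa [hcol_last] using hone_T
    | cast k => exact hcol_castSucc k ▸ Submodule.subset_span ⟨_, rfl⟩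
  · rw [Submodule.span_le, Set.range_subset_iff]
    intro j
    by_cases hj : (j : ℕ) < n
    · exact hfirst_S j hj
    · rw [← Fin.rev_rev j, hcol_rev]
      exact S.sub_mem hone_S (hfirst_S _ (by simp; omega))

end FirstColsSnocOne

end Matrix

open Matrix in
theorem stmt5_general (ℓ p n : ℕ) [Fact p.Prime] (hℓ : ℓ.Prime) (hℓo : Odd ℓ)
    (hn : n = (ℓ - 1) / 2)
    (N' : Matrix (Fin (n + 1)) (Fin (2 * n)) (ZMod p))
    (hN' : ∀ i j, N' i j =
      if (((i : ℕ) + 1) * ((j : ℕ) + 1)) % ℓ ∈ Finset.Icc 1 n then 1 else 0)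
    (N : Matrix (Fin n) (Fin n) ℤ)
    (hN : ∀ i j, N i j =
      if (((i : ℕ) + 1) * ((j : ℕ) + 1)) % ℓ ∈ Finset.Icc 1 n then 1 else 0) :
    N'.rank = n + 1 ↔ ¬ ((p : ℤ) ∣ N.det) := by
  obtain ⟨k, rfl⟩ := hℓo
  obtain rfl : n = k := by omega
  have hn0 : 0 < n := by have := hℓ.two_le; omega
  have hpair : ∀ i j, N' i j.rev = 1 - N' i j := fun i j => by
    rw [hN', hN']
    exact ite_mem_Icc_mod_mul_rev hℓ (by omega) (by omega) j
  have hcol_last_sub_first : ∀ i, N'.firstColsSnocOne i (Fin.last n) -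
      N'.firstColsSnocOne i (Fin.castSucc ⟨0, hn0⟩) = if i = Fin.last n then 1 else 0 := by
    intro i
    have hi : ((i : ℕ) + 1) % (2 * n + 1) = (i : ℕ) + 1 := Nat.mod_eq_of_lt (by omega)
    simp only [firstColsSnocOne, of_apply, Fin.snoc_last, Fin.snoc_castSucc, hN', Fin.val_castLE,
      zero_add, mul_one, hi, Fin.ext_iff, Fin.val_last, Finset.mem_Icc]
    split_ifs <;> first | (exfalso; omega) | simp
  have hdet : N'.firstColsSnocOne.det = (N.det : ZMod p) := by
    rw [det_eq_det_submatrix_castSucc_of_col_last_sub _ (Fin.castSucc_lt_last _).ne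
        hcol_last_sub_first, Int.cast_det]
    congr 1
    ext i j
    simp [firstColsSnocOne, hN, hN']
  rw [← rank_firstColsSnocOne hn0 N' hpair]
  simpa only [Fintype.card_fin, hdet, Ne, ZMod.intCast_zmod_eq_zero_iff_dvd] using
    rank_eq_card_iff_det_ne_zero N'.firstColsSnocOne

/-- Let `ℓ` and `p` be odd primes, `n = (ℓ−1)/2`, and for `1 ≤ i, j ≤ 2n` let
`n_{ij} = 1` if `ij mod ℓ` lies in `{1,…,n}` and `0` otherwise. Let
`N'_ℓ ∈ M_{(n+1)×2n}(ℤ/pℤ)` be the matrix `(n_{ij})` for `1 ≤ i ≤ n+1`,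
`1 ≤ j ≤ 2n`, and let `N_ℓ = (n_{ij})_{1≤i,j≤n} ∈ M_n(ℤ)`. Then `N'_ℓ` has
rank `n+1` over `ℤ/pℤ` if and only if `p ∤ det(N_ℓ)`. -/
theorem stmt5 (ℓ p n : ℕ) [Fact p.Prime] (hℓ : ℓ.Prime) (hℓo : Odd ℓ)
    (hpo : Odd p) (hn : n = (ℓ - 1) / 2)
    (N' : Matrix (Fin (n + 1)) (Fin (2 * n)) (ZMod p))
    (hN' : ∀ i j, N' i j =
      if (((i : ℕ) + 1) * ((j : ℕ) + 1)) % ℓ ∈ Finset.Icc 1 n then 1 else 0)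
    (N : Matrix (Fin n) (Fin n) ℤ)
    (hN : ∀ i j, N i j =
      if (((i : ℕ) + 1) * ((j : ℕ) + 1)) % ℓ ∈ Finset.Icc 1 n then 1 else 0) :
    N'.rank = n + 1 ↔ ¬ ((p : ℤ) ∣ N.det) :=
  stmt5_general ℓ p n hℓ hℓo hn N' hN' N hN
end

section
/- Let ℓ and p be odd primes, n = (ℓ−1)/2, k = ℚ(ζ_ℓ), and suppose p divides neither ℓ, nor h_ℓ^+, nor n. If u = 1 + 2p^μ·b is a real unit in S_μ with b ∈ ℤ[ζ_ℓ + ζ_ℓ^{-1}], write b = a_0 + a_1(ζ+ζ^{-1}) + … + a_{n−1}(ζ+ζ^{-1})^{n−1} with a_i ∈ ℤ. If p divides a_i for all 1 ≤ i ≤ n−1, then p divides a_0 and u ∈ S_{μ+1}. -/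
/-!
Write `e = 2p^μ`. For an algebraic integer `x`, expanding the determinant of `1 + e·x` gives
`N(1 + e x) ≡ 1 + e Tr(x) (mod e²)`; since the norm of a unit is `±1` and `|e| > 2`, this forces
`e ∣ Tr(x)`. Modulo `p` the hypotheses reduce `b` to the rational integer `a₀`, so
`Tr(b) ≡ [k : ℚ] a₀ = 2n a₀ (mod p)`, and `p ∤ 2n` gives `p ∣ a₀`, i.e. `p ∣ b`.
-/

open NumberField Finset Module

theorem Int.dvd_of_isUnit_one_add_mul_add_mul_sq {e t q : ℤ} (he : 2 < |e|)
    (h : IsUnit (1 + t * e + q * e ^ 2)) : e ∣ t := by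
  have hfac : e * (t + q * e) = (1 + t * e + q * e ^ 2) - 1 := by ring
  rcases Int.isUnit_iff.mp h with h1 | h1 <;> rw [h1] at hfac
  · have he0 : e ≠ 0 := by rintro rfl; simp at he
    have : t + q * e = 0 := (mul_eq_zero.mp (by simpa using hfac)).resolve_left he0
    exact ⟨-q, by linear_combination this⟩
  · have h2 : e ∣ 2 := ⟨-(t + q * e), by linear_combination hfac⟩
    have := Int.le_of_dvd two_pos ((abs_dvd _ _).mpr h2)
    omega

section FreeIntAlgebra

variable {B : Type*} [CommRing B] [Module.Free ℤ B] [Module.Finite ℤ B]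

theorem Algebra.dvd_trace_of_isUnit_one_add_smul {e : ℤ} (he : 2 < |e|) {x : B}
    (hx : IsUnit (1 + e • x)) : e ∣ Algebra.trace ℤ B x := by
  obtain ⟨q, hq⟩ := Algebra.norm_one_add_smul e x
  have hN := hx.map (Algebra.norm ℤ (S := B))
  rw [hq] at hN
  exact Int.dvd_of_isUnit_one_add_mul_add_mul_sq he hN

theorem Algebra.dvd_of_isUnit_one_add_smul_algebraMap_add_smul {p e a : ℤ} (hp : Prime p)
    (hrank : ¬ p ∣ finrank ℤ B) (he : 2 < |e|) (hpe : p ∣ e) {y : B}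
    (h : IsUnit (1 + e • (algebraMap ℤ B a + p • y))) : p ∣ a := by
  have htrace := Algebra.dvd_trace_of_isUnit_one_add_smul he h
  rw [map_add, Algebra.trace_algebraMap, map_zsmul, smul_eq_mul, nsmul_eq_mul] at htrace
  have hdvd : p ∣ finrank ℤ B * a := (dvd_add_left (dvd_mul_right _ _)).mp (hpe.trans htrace)
  exact (hp.dvd_or_dvd hdvd).resolve_left hrank

end FreeIntAlgebra

theorem IsPrimitiveRoot.isCyclotomicExtension_of_adjoin_eq_top {A B : Type*} [CommRing A]
    [CommRing B] [Algebra A B] {ζ : B} {n : ℕ} [NeZero n] (hζ : IsPrimitiveRoot ζ n)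
    (h : Algebra.adjoin A {ζ} = ⊤) : IsCyclotomicExtension {n} A B := by
  refine (IsCyclotomicExtension.iff_singleton n A B).mpr ⟨⟨ζ, hζ⟩, fun x => ?_⟩
  have hsub : ({ζ} : Set B) ⊆ {b : B | b ^ n = 1} := Set.singleton_subset_iff.mpr hζ.pow_eq_one
  have hx : x ∈ Algebra.adjoin A {ζ} := by rw [h]; exact Algebra.mem_top
  exact Algebra.adjoin_mono hsub hx

theorem IsPrimitiveRoot.finrank_ringOfIntegers_of_adjoin_eq_top {K : Type*} [Field K]
    [NumberField K] {ζ : K} {n : ℕ} (hn : 0 < n) (hζ : IsPrimitiveRoot ζ n)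
    (h : Algebra.adjoin ℚ {ζ} = ⊤) : finrank ℤ (𝓞 K) = n.totient := by
  have : NeZero n := ⟨hn.ne'⟩
  have := hζ.isCyclotomicExtension_of_adjoin_eq_top h
  rw [RingOfIntegers.rank,
    IsCyclotomicExtension.finrank K (Polynomial.cyclotomic.irreducible_rat hn)]

theorem NumberField.RingOfIntegers.isUnit_of_mul_eq_one {K : Type*} [Field K] {x : 𝓞 K} {v : K}
    (hv : IsIntegral ℤ v) (h : (x : K) * v = 1) : IsUnit x := by
  obtain ⟨V, rfl⟩ : ∃ V : 𝓞 K, (V : K) = v := ⟨⟨v, hv⟩, rfl⟩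
  exact IsUnit.of_mul_eq_one V (RingOfIntegers.ext (by simpa using h))

theorem sum_range_succ_eq_add_mul_of_dvd {R : Type*} [CommRing R] (x : R) (a : ℕ → ℤ)
    (p : ℤ) (m : ℕ) (h : ∀ i < m, p ∣ a (i + 1)) :
    ∑ i ∈ range (m + 1), (a i : R) * x ^ i =
      a 0 + p * ∑ i ∈ range m, ((a (i + 1) / p : ℤ) : R) * x ^ (i + 1) := by
  rw [sum_range_succ', mul_sum, add_comm]
  congr 1
  · simp
  refine sum_congr rfl fun i hi => ?_
  rw [← mul_assoc, ← Int.cast_mul, Int.mul_ediv_cancel' (h i (mem_range.mp hi))]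

theorem exists_isIntegral_sum_range_succ_eq_add_mul_of_dvd {R : Type*} [CommRing R] {x : R}
    (hx : IsIntegral ℤ x) (a : ℕ → ℤ) (p : ℤ) (m : ℕ) (h : ∀ i < m, p ∣ a (i + 1)) :
    ∃ y : R, IsIntegral ℤ y ∧ ∑ i ∈ range (m + 1), (a i : R) * x ^ i = a 0 + p * y :=
  ⟨_, IsIntegral.sum _ fun _ _ => isIntegral_algebraMap.mul (hx.pow _),
    sum_range_succ_eq_add_mul_of_dvd x a p m h⟩

theorem stmt11_general (ℓ p n μ : ℕ) (hℓ : ℓ.Prime) (hℓo : Odd ℓ) (hp : p.Prime)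
    (hpo : Odd p) (hn : n = (ℓ - 1) / 2) (hμ : 0 < μ)
    (K : Type*) [Field K] [NumberField K] (ζ : K) (hζ : IsPrimitiveRoot ζ ℓ)
    (hgen : Algebra.adjoin ℚ ({ζ} : Set K) = ⊤)
    (hpn : ¬ p ∣ n)
    (u b : K) (a : ℕ → ℤ)
    (hu : u = 1 + 2 * (p : K) ^ μ * b)
    (hb : b = ∑ i ∈ Finset.range n, (a i : K) * (ζ + ζ⁻¹) ^ i)
    (huunit : ∃ v : K, IsIntegral ℤ v ∧ u * v = 1)
    (hdvd : ∀ i, 1 ≤ i → i ≤ n - 1 → (p : ℤ) ∣ a i) :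
    (p : ℤ) ∣ a 0 ∧ ∃ β : K, IsIntegral ℤ β ∧ u = 1 + 2 * (p : K) ^ (μ + 1) * β := by
  have hℓn : ℓ - 1 = 2 * n := by obtain ⟨k, rfl⟩ := hℓo; omega
  obtain ⟨m, rfl⟩ : ∃ m, n = m + 1 := ⟨n - 1, by have := hℓ.two_le; omega⟩
  have hprank : ¬ (p : ℤ) ∣ finrank ℤ (𝓞 K) := by
    rw [hζ.finrank_ringOfIntegers_of_adjoin_eq_top hℓ.pos hgen, Nat.totient_prime hℓ, hℓn,
      Int.natCast_dvd_natCast, hp.dvd_mul, (Nat.prime_dvd_prime_iff_eq hp Nat.prime_two)]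
    rintro (rfl | h)
    exacts [Nat.not_odd_iff_even.mpr even_two hpo, hpn h]
  obtain ⟨b', hb', hbsplit⟩ := exists_isIntegral_sum_range_succ_eq_add_mul_of_dvd
    ((hζ.isIntegral hℓ.pos).add (hζ.inv.isIntegral hℓ.pos)) a p m
    fun i hi => hdvd (i + 1) (by omega) (by omega)
  rw [← hb] at hbsplit
  obtain ⟨B, rfl⟩ : ∃ B : 𝓞 K, (B : K) = b' := ⟨⟨b', hb'⟩, rfl⟩
  obtain ⟨v, hv, huv⟩ := huunit
  set x : 𝓞 K := algebraMap ℤ (𝓞 K) (a 0) + (p : ℤ) • B with hx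
  have hxu : ((1 + (2 * p ^ μ : ℤ) • x : 𝓞 K) : K) = u := by
    simp only [hx, hu, hbsplit, algebraMap_int_eq, eq_intCast, zsmul_eq_mul, Int.cast_natCast,
      Int.cast_mul, Int.cast_ofNat, Int.cast_pow, map_add, map_one, map_mul, map_ofNat, map_pow,
      map_natCast, map_intCast]
  have he : 2 < |(2 * p ^ μ : ℤ)| := by
    have : (1 : ℤ) < p ^ μ := by exact_mod_cast Nat.one_lt_pow hμ.ne' hp.one_lt
    rw [abs_of_pos (by linarith)]
    linarith
  have hpa0 : (p : ℤ) ∣ a 0 := Algebra.dvd_of_isUnit_one_add_smul_algebraMap_add_smul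
    (Nat.prime_iff_prime_int.mp hp) hprank he
    (dvd_mul_of_dvd_right (dvd_pow_self _ hμ.ne') 2)
    (RingOfIntegers.isUnit_of_mul_eq_one hv (hxu ▸ huv))
  refine ⟨hpa0, ((a 0 / p : ℤ) : K) + B, isIntegral_algebraMap.add hb', ?_⟩
  have ha0 : (a 0 : K) = p * ((a 0 / p : ℤ) : K) := by
    exact_mod_cast (Int.mul_ediv_cancel' hpa0).symm
  rw [hu, hbsplit, ha0]
  push_cast
  ring

/-- Let `ℓ` and `p` be odd primes, `n = (ℓ−1)/2`, `k = ℚ(ζ_ℓ)`, and suppose `p`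
divides neither `ℓ`, nor `h_ℓ^+`, nor `n`. If `u = 1 + 2p^μ·b` is a real unit in
`S_μ` with `b = a_0 + a_1(ζ+ζ^{-1}) + … + a_{n−1}(ζ+ζ^{-1})^{n−1}`, `a_i ∈ ℤ`, and
`p ∣ a_i` for all `1 ≤ i ≤ n−1`, then `p ∣ a_0` and `u ∈ S_{μ+1}`. -/
theorem stmt11 (ℓ p n μ : ℕ) (hℓ : ℓ.Prime) (hℓo : Odd ℓ) (hp : p.Prime)
    (hpo : Odd p) (hn : n = (ℓ - 1) / 2) (hμ : 0 < μ)
    (K : Type*) [Field K] [NumberField K] (ζ : K) (hζ : IsPrimitiveRoot ζ ℓ)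
    (hgen : Algebra.adjoin ℚ ({ζ} : Set K) = ⊤)
    (hpℓ : ¬ p ∣ ℓ) (hpn : ¬ p ∣ n)
    (c : K ≃ₐ[ℚ] K) (hc : c ζ = ζ⁻¹)
    (hph : ¬ p ∣
      Nat.card (ClassGroup (NumberField.RingOfIntegers
        (IntermediateField.fixedField (Subgroup.zpowers c)))))
    (u b : K) (a : ℕ → ℤ)
    (hu : u = 1 + 2 * (p : K) ^ μ * b)
    (hb : b = ∑ i ∈ Finset.range n, (a i : K) * (ζ + ζ⁻¹) ^ i)
    (huint : IsIntegral ℤ u) (huunit : ∃ v : K, IsIntegral ℤ v ∧ u * v = 1)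
    (hureal : c u = u)
    (hdvd : ∀ i, 1 ≤ i → i ≤ n - 1 → (p : ℤ) ∣ a i) :
    (p : ℤ) ∣ a 0 ∧ ∃ β : K, IsIntegral ℤ β ∧ u = 1 + 2 * (p : K) ^ (μ + 1) * β :=
  stmt11_general ℓ p n μ hℓ hℓo hp hpo hn hμ K ζ hζ hgen hpn u b a hu hb huunit hdvd
end

section
/- Let ℓ = 5 and ξ_2 = ζ_5^{-1/2}·(1−ζ_5^2)/(1−ζ_5) (so ξ_2 = ζ_5^2·(1−ζ_5^2)/(1−ζ_5) up to sign normalization, equal to the golden ratio unit). Then ξ_2^{48} ≡ 1 (mod 14) but ξ_2^{48} ≢ 1 (mod 98) in ℤ[ζ_5]. -/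
/-!
Here `ξ = -(ζ² + ζ³) = 2 cos(π/5)` is the golden ratio, so `ξ² = ξ + 1` and
`ξ⁴⁸ = F₄₈ ξ + F₄₇`, i.e. `ξ⁴⁸ - 1 = (F₄₇ - 1) - F₄₈ (ζ² + ζ³)`. Both `F₄₇ - 1` and
`F₄₈ = 14 · 343394784` are divisible by `14`, but `7 ∤ 343394784`. Since `Φ₅`, the minimal
polynomial of `ζ` over `ℤ`, has degree `4`, the elements `1, ζ, ζ², ζ³` form a `ℤ`-basis of
`ℤ[ζ]`, so `98 ∣ ξ⁴⁸ - 1` would force `98 ∣ F₄₈`.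
-/

open Polynomial

theorem pow_succ_eq_fib_mul_add_fib {R : Type*} [CommRing R] {x : R} (hx : x ^ 2 = x + 1)
    (n : ℕ) : x ^ (n + 1) = Nat.fib (n + 1) * x + Nat.fib n := by
  induction n with
  | zero => simp
  | succ n ih =>
    rw [pow_succ, ih, Nat.fib_add_two, Nat.cast_add]
    linear_combination (Nat.fib (n + 1) : R) * hx

theorem IsPrimitiveRoot.neg_sq_add_pow_three_sq {R : Type*} [CommRing R] [IsDomain R] {ζ : R}
    (hζ : IsPrimitiveRoot ζ 5) : (-(ζ ^ 2 + ζ ^ 3)) ^ 2 = -(ζ ^ 2 + ζ ^ 3) + 1 := by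
  have hsum : ∑ i ∈ Finset.range 5, ζ ^ i = 0 := hζ.geom_sum_eq_zero (by norm_num)
  simp only [Finset.sum_range_succ, Finset.sum_range_zero] at hsum
  linear_combination (ζ + 2) * hζ.pow_eq_one + hsum

theorem inv_mul_one_sub_sq_div_one_sub {K : Type*} [Field K] {ω ζ : K} (hsq : ω ^ 2 = ζ)
    (h5 : ω ^ 5 = -1) (hζ : ζ ≠ 1) : ω⁻¹ * ((1 - ζ ^ 2) / (1 - ζ)) = -(ζ ^ 2 + ζ ^ 3) := by
  have hinv : ω⁻¹ = -ζ ^ 2 :=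
    inv_eq_of_mul_eq_one_right (by linear_combination -h5 + ω * (ω ^ 2 + ζ) * hsq)
  rw [hinv, div_eq_of_eq_mul (sub_ne_zero.2 hζ.symm) (by ring : 1 - ζ ^ 2 = (1 + ζ) * (1 - ζ))]
  ring

theorem dvd_coeff_of_aeval_eq_mul {R S : Type*} [CommRing R] [IsDomain R] [IsIntegrallyClosed R]
    [CommRing S] [IsDomain S] [Algebra R S] [Module.IsTorsionFree R S] {x : S}
    (hx : IsIntegral R x) {p : R[X]} (hp : p.natDegree < (minpoly R x).natDegree) {m : R} {β : S}
    (hβ : β ∈ Algebra.adjoin R {x}) (h : aeval x p = algebraMap R S m * β) (i : ℕ) :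
    m ∣ p.coeff i := by
  rw [Algebra.adjoin_singleton_eq_range_aeval, AlgHom.mem_range] at hβ
  obtain ⟨q, rfl⟩ := hβ
  set r := q %ₘ minpoly R x
  have hr : aeval x r = aeval x q := aeval_modByMonic_eq_self_of_root (minpoly.aeval R x)
  have hrdeg : r.natDegree < (minpoly R x).natDegree :=
    natDegree_modByMonic_lt q (minpoly.monic hx) (minpoly.ne_one R x)
  have hzero : p - C m * r = 0 := by
    by_contra hne
    have hle := natDegree_le_natDegree
      (minpoly.IsIntegrallyClosed.degree_le_of_ne_zero (s := x) hne (by simp [h, hr]))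
    have hsub := natDegree_sub_le p (C m * r)
    have hCr := natDegree_C_mul_le m r
    omega
  exact ⟨r.coeff i, by simpa [sub_eq_zero] using congr_arg (coeff · i) hzero⟩

/-- Let `ℓ = 5` and `ξ_2 = ζ_{10}^{-1}·(1−ζ_5^2)/(1−ζ_5)` (a real fundamental unit).
Then `ξ_2^{48} ≡ 1 (mod 14)` but `ξ_2^{48} ≢ 1 (mod 98)` in `ℤ[ζ_5]`, i.e.
`14 ∣ (ξ_2^{48} − 1)` but `98 ∤ (ξ_2^{48} − 1)` in `ℤ[ζ_5]`. -/
theorem stmt13 (ζ₅ ζ₁₀ ξ : ℂ)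
    (h5 : ζ₅ = Complex.exp (2 * Real.pi * Complex.I / 5))
    (h10 : ζ₁₀ = Complex.exp (2 * Real.pi * Complex.I / 10))
    (hξ : ξ = ζ₁₀⁻¹ * ((1 - ζ₅ ^ 2) / (1 - ζ₅))) :
    (∃ β ∈ Algebra.adjoin ℤ ({ζ₅} : Set ℂ), ξ ^ 48 - 1 = 14 * β) ∧
    ¬ (∃ β ∈ Algebra.adjoin ℤ ({ζ₅} : Set ℂ), ξ ^ 48 - 1 = 98 * β) := by
  have hζ : IsPrimitiveRoot ζ₅ 5 := h5 ▸ Complex.isPrimitiveRoot_exp 5 (by norm_num)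
  have hξζ : ξ = -(ζ₅ ^ 2 + ζ₅ ^ 3) := by
    rw [hξ]
    refine inv_mul_one_sub_sq_div_one_sub ?_ ?_ (hζ.ne_one (by norm_num))
    · rw [h10, h5, ← Complex.exp_nat_mul]; push_cast; ring_nf
    · rw [h10, ← Complex.exp_nat_mul, ← Complex.exp_pi_mul_I]; push_cast; ring_nf
  set p : ℤ[X] := C (Nat.fib 47 - 1 : ℤ) - C (Nat.fib 48 : ℤ) * (X ^ 2 + X ^ 3)
  have hpow : ξ ^ 48 - 1 = aeval ζ₅ p := by
    rw [pow_succ_eq_fib_mul_add_fib (hξζ ▸ hζ.neg_sq_add_pow_three_sq) 47, hξζ]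
    simp only [p, map_sub, map_mul, map_add, map_pow, aeval_X, map_one, map_natCast]
    ring
  constructor
  · obtain ⟨a, ha⟩ : (14 : ℤ) ∣ Nat.fib 47 - 1 := by norm_num
    obtain ⟨b, hb⟩ : (14 : ℤ) ∣ Nat.fib 48 := by norm_num
    refine ⟨aeval ζ₅ (C a - C b * (X ^ 2 + X ^ 3)), aeval_mem_adjoin_singleton ℤ _, ?_⟩
    rw [hpow, show p = C 14 * (C a - C b * (X ^ 2 + X ^ 3)) by simp only [p, ha, hb, C_mul]; ring,
      map_mul, aeval_C, map_ofNat]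
  · rintro ⟨β, hβ, h⟩
    have hdeg : p.natDegree < (minpoly ℤ ζ₅).natDegree := by
      rw [← cyclotomic_eq_minpoly hζ (by norm_num), natDegree_cyclotomic,
        Nat.totient_prime (by norm_num)]
      simp only [p]
      compute_degree!
    have hdvd := dvd_coeff_of_aeval_eq_mul (hζ.isIntegral (by norm_num)) hdeg (m := 98) hβ
      (by rw [← hpow, h, map_ofNat]) 2
    have hcoeff : p.coeff 2 = -Nat.fib 48 := by simp [p, coeff_one]
    rw [hcoeff] at hdvd
    norm_num at hdvd
end
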